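/- arXiv:2504.14805 — 2 statements merged into one kernel-verified Lean document; each statement's English description precedes it below -/
import Mathlib

section
/- Let X be a finite type, let a, b : X → ℝ be nonnegative weight functions, and let σ : ℝ → ℝ be the logistic sigmoid σ(t) = 1/(1 + exp(−t)). Then for every score function f : X → ℝ, one has ∑_{x} [ a(x)·log(σ(f(x))) + b(x)·log(1 − σ(f(x))) ] ≤ ∑_{x} [ a(x)·log(a(x)/(a(x)+b(x))) + b(x)·log(b(x)/(a(x)+b(x))) ], where a term of the form 0·log(0/(0+c)) is interpreted as 0. -/
/-!
Each summand is a binary cross-entropy `a log p + b log (1 - p)` with `p = σ(f x) ∈ (0, 1)`, and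
Gibbs' inequality says it is maximised at `p = a / (a + b)`. Concretely, `log y ≤ y - 1` gives
`a log p - a log (a / s) ≤ p s - a` and `b log (1 - p) - b log (b / s) ≤ (1 - p) s - b` for
`s = a + b`, and the two right-hand sides add up to `0`.
-/

/-- The logistic sigmoid `σ(t) = 1/(1 + exp(-t))`. -/
noncomputable def sigmoid (t : ℝ) : ℝ := 1 / (1 + Real.exp (-t))

lemma sigmoid_eq_real_sigmoid (t : ℝ) : sigmoid t = Real.sigmoid t := one_div _

lemma mul_log_sub_mul_log_div_le {a q s : ℝ} (ha : 0 ≤ a) (hq : 0 < q) (hs : 0 < s) :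
    a * Real.log q - a * Real.log (a / s) ≤ q * s - a := by
  rcases ha.eq_or_lt with rfl | ha
  · simpa using (mul_pos hq hs).le
  have has : 0 < a / s := div_pos ha hs
  calc a * Real.log q - a * Real.log (a / s) = a * Real.log (q / (a / s)) := by
        rw [Real.log_div hq.ne' has.ne', mul_sub]
    _ ≤ a * (q / (a / s) - 1) :=
        mul_le_mul_of_nonneg_left (Real.log_le_sub_one_of_pos (div_pos hq has)) ha.le
    _ = q * s - a := by field_simp

lemma mul_log_add_mul_log_one_sub_le {a b p : ℝ} (ha : 0 ≤ a) (hb : 0 ≤ b)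
    (hp₀ : 0 < p) (hp₁ : p < 1) :
    a * Real.log p + b * Real.log (1 - p) ≤
      a * Real.log (a / (a + b)) + b * Real.log (b / (a + b)) := by
  rcases (add_nonneg ha hb).eq_or_lt with hs | hs
  · obtain ⟨rfl, rfl⟩ : a = 0 ∧ b = 0 := (add_eq_zero_iff_of_nonneg ha hb).mp hs.symm
    simp
  have hpos := mul_log_sub_mul_log_div_le ha hp₀ hs
  have hneg := mul_log_sub_mul_log_div_le hb (sub_pos.mpr hp₁) hs
  linarith

/-- NCE bound for the sigmoid parameterization: for any score function `f`,
the NCE objective is bounded above by the Bayes-optimal discrimination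
objective with optimal classifier `g*(x) = a(x)/(a(x)+b(x))`.  (Terms with a
zero first factor vanish, matching the stated convention.) -/
theorem nce_sigmoid_bound {X : Type*} [Fintype X]
    (a b : X → ℝ) (ha : ∀ x, 0 ≤ a x) (hb : ∀ x, 0 ≤ b x)
    (f : X → ℝ) :
    ∑ x, (a x * Real.log (sigmoid (f x)) + b x * Real.log (1 - sigmoid (f x))) ≤
      ∑ x, (a x * Real.log (a x / (a x + b x)) +
            b x * Real.log (b x / (a x + b x))) :=
  Finset.sum_le_sum fun x _ => by
    rw [sigmoid_eq_real_sigmoid]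
    exact mul_log_add_mul_log_one_sub_le (ha x) (hb x)
      (Real.sigmoid_pos (f x)) (Real.sigmoid_lt_one (f x))
end

section
/- Let W and S be finite types and let p : W × S → ℝ be a probability mass function with p(w,s) > 0 for all (w,s). Let p₁(w) = ∑_{s} p(w,s), p₂(s) = ∑_{w} p(w,s), and q(w,s) = p₁(w)·p₂(s). Then ∑_{(w,s)} [ p(w,s)·log(p(w,s)/(p(w,s)+q(w,s))) + q(w,s)·log(q(w,s)/(p(w,s)+q(w,s))) ] = −2·log 2 if and only if p(w,s) = p₁(w)·p₂(s) for all (w,s), i.e., if and only if the two coordinates are independent under p. -/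
private lemma aux_log_ge (x : ℝ) (hx : 0 < x) : 1 - x⁻¹ ≤ Real.log x := by
  have h := Real.log_le_sub_one_of_pos (inv_pos.2 hx)
  rw [Real.log_inv] at h
  linarith

private lemma aux_log_gt (x : ℝ) (hx : 0 < x) (hne : x ≠ 1) :
    1 - x⁻¹ < Real.log x := by
  have h := Real.log_lt_sub_one_of_pos (inv_pos.2 hx) (by
    intro h'
    exact hne (by field_simp at h'; simp [h'.symm]))
  rw [Real.log_inv] at h
  linarith

private lemma term_lower (a b : ℝ) (ha : 0 < a) (hb : 0 < b) :
    -((a + b) * Real.log 2) ≤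
      a * Real.log (a / (a + b)) + b * Real.log (b / (a + b)) := by
  have hc : 0 < a + b := by linarith
  have hxa : 0 < 2 * a / (a + b) := by positivity
  have hxb : 0 < 2 * b / (a + b) := by positivity
  have h1 := aux_log_ge _ hxa
  have h2 := aux_log_ge _ hxb
  have e1 : Real.log (2 * a / (a + b)) = Real.log 2 + Real.log (a / (a + b)) := by
    rw [show 2 * a / (a + b) = 2 * (a / (a + b)) by ring,
      Real.log_mul two_ne_zero (by positivity)]
  have e2 : Real.log (2 * b / (a + b)) = Real.log 2 + Real.log (b / (a + b)) := by
    rw [show 2 * b / (a + b) = 2 * (b / (a + b)) by ring,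
      Real.log_mul two_ne_zero (by positivity)]
  have i1 : a * (2 * a / (a + b))⁻¹ = (a + b) / 2 := by
    rw [inv_div]; field_simp
  have i2 : b * (2 * b / (a + b))⁻¹ = (a + b) / 2 := by
    rw [inv_div]; field_simp
  have m1 := mul_le_mul_of_nonneg_left h1 ha.le
  have m2 := mul_le_mul_of_nonneg_left h2 hb.le
  rw [e1] at m1; rw [e2] at m2
  nlinarith [m1, m2]

private lemma term_lower_strict (a b : ℝ) (ha : 0 < a) (hb : 0 < b) (hab : a ≠ b) :
    -((a + b) * Real.log 2) <
      a * Real.log (a / (a + b)) + b * Real.log (b / (a + b)) := by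
  have hc : 0 < a + b := by linarith
  have hxa : 0 < 2 * a / (a + b) := by positivity
  have hxb : 0 < 2 * b / (a + b) := by positivity
  have hne : 2 * a / (a + b) ≠ 1 := by
    intro h
    apply hab
    field_simp at h
    linarith
  have h1 := aux_log_gt _ hxa hne
  have h2 := aux_log_ge _ hxb
  have e1 : Real.log (2 * a / (a + b)) = Real.log 2 + Real.log (a / (a + b)) := by
    rw [show 2 * a / (a + b) = 2 * (a / (a + b)) by ring,
      Real.log_mul two_ne_zero (by positivity)]
  have e2 : Real.log (2 * b / (a + b)) = Real.log 2 + Real.log (b / (a + b)) := by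
    rw [show 2 * b / (a + b) = 2 * (b / (a + b)) by ring,
      Real.log_mul two_ne_zero (by positivity)]
  have i1 : a * (2 * a / (a + b))⁻¹ = (a + b) / 2 := by
    rw [inv_div]; field_simp
  have i2 : b * (2 * b / (a + b))⁻¹ = (a + b) / 2 := by
    rw [inv_div]; field_simp
  have m1 := (mul_lt_mul_iff_right₀ ha).2 h1
  have m2 := mul_le_mul_of_nonneg_left h2 hb.le
  rw [e1] at m1; rw [e2] at m2
  nlinarith [m1, m2]

private lemma term_eq (a : ℝ) (ha : 0 < a) :
    a * Real.log (a / (a + a)) + a * Real.log (a / (a + a)) =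
      -((a + a) * Real.log 2) := by
  have h : a / (a + a) = 2⁻¹ := by field_simp; ring
  rw [h, Real.log_inv]
  ring

/-- The optimized contrastive (NCE) objective attains its minimum possible
value `-2·log 2` iff the joint pmf `p` factorizes as the product of its
marginals, i.e. iff the two coordinates are independent under `p`. -/
theorem nce_optimal_value_eq_min_iff_indep {W S : Type*} [Fintype W] [Fintype S]
    (p : W × S → ℝ) (hp : ∀ x, 0 < p x) (hp1 : ∑ x, p x = 1)
    (p₁ : W → ℝ) (hp₁ : ∀ w, p₁ w = ∑ s, p (w, s))
    (p₂ : S → ℝ) (hp₂ : ∀ s, p₂ s = ∑ w, p (w, s))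
    (q : W × S → ℝ) (hq : ∀ x, q x = p₁ x.1 * p₂ x.2) :
    ∑ x, (p x * Real.log (p x / (p x + q x)) +
          q x * Real.log (q x / (p x + q x))) = -(2 * Real.log 2) ↔
      ∀ x, p x = p₁ x.1 * p₂ x.2 := by
  haveI hne : Nonempty (W × S) := by
    by_contra h
    rw [not_nonempty_iff] at h
    simp [Finset.univ_eq_empty] at hp1
  haveI : Nonempty W := ⟨(Classical.arbitrary (W × S)).1⟩
  haveI : Nonempty S := ⟨(Classical.arbitrary (W × S)).2⟩
  have hq_pos : ∀ x, 0 < q x := by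
    intro x
    rw [hq x]
    have h1 : 0 < p₁ x.1 := by
      rw [hp₁]
      exact Finset.sum_pos (fun s _ => hp _) Finset.univ_nonempty
    have h2 : 0 < p₂ x.2 := by
      rw [hp₂]
      exact Finset.sum_pos (fun w _ => hp _) Finset.univ_nonempty
    positivity
  have hsum_p₁ : ∑ w, p₁ w = 1 := by
    rw [← hp1, Fintype.sum_prod_type]
    exact Finset.sum_congr rfl fun w _ => hp₁ w
  have hsum_p₂ : ∑ s, p₂ s = 1 := by
    rw [← hp1, Fintype.sum_prod_type, Finset.sum_comm]
    exact Finset.sum_congr rfl fun s _ => hp₂ s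
  have hq1 : ∑ x, q x = 1 := by
    calc ∑ x, q x = ∑ w, ∑ s, p₁ w * p₂ s := by
          rw [Fintype.sum_prod_type]
          exact Finset.sum_congr rfl fun w _ => Finset.sum_congr rfl fun s _ => hq (w, s)
      _ = (∑ w, p₁ w) * (∑ s, p₂ s) := by
          rw [Finset.sum_mul]
          exact Finset.sum_congr rfl fun w _ => (Finset.mul_sum _ _ _).symm
      _ = 1 := by rw [hsum_p₁, hsum_p₂]; ring
  have hbound_sum : ∑ x, -((p x + q x) * Real.log 2) = -(2 * Real.log 2) := by
    rw [Finset.sum_neg_distrib]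
    have : ∑ x, (p x + q x) * Real.log 2 = 2 * Real.log 2 := by
      rw [← Finset.sum_mul, Finset.sum_add_distrib, hp1, hq1]
      ring
    rw [this]
  constructor
  · intro hsum x
    rw [← hq x]
    by_contra hne'
    have hlt : ∑ y, -((p y + q y) * Real.log 2) <
        ∑ y, (p y * Real.log (p y / (p y + q y)) +
              q y * Real.log (q y / (p y + q y))) := by
      apply Finset.sum_lt_sum (fun y _ => term_lower (p y) (q y) (hp y) (hq_pos y))
      exact ⟨x, Finset.mem_univ x, term_lower_strict (p x) (q x) (hp x) (hq_pos x) hne'⟩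
    rw [hbound_sum, hsum] at hlt
    exact lt_irrefl _ hlt
  · intro hfac
    rw [← hbound_sum]
    apply Finset.sum_congr rfl
    intro x _
    have hpq : q x = p x := by rw [hq x, ← hfac x]
    rw [hpq]
    exact term_eq (p x) (hp x)
end
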